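/- Let H₁, H₂, K₁, K₂ be real Hilbert spaces, and let L₁₁ : H₁ → K₁, L₁₂ : H₂ → K₁, L₂₁ : H₁ → K₂, L₂₂ : H₂ → K₂ be bounded linear operators. Let α₁, α₂, μ₁, μ₂ > 0. Suppose α₁‖L₁₂‖² + (α₁+α₂)‖L₂₂‖² < (4/3)μ₂ and α₂‖L₁₁‖² + (α₁+α₂)‖L₂₁‖² < (4/3)μ₁. Define the operator 𝕃 on H₁ × H₂ by 𝕃(v₁, v₂) = (α₁ L₁₁*(L₁₁ v₁ + L₁₂ v₂) + μ₁ v₁, α₂ L₁₂*(L₁₁ v₁ + L₁₂ v₂) + μ₂ v₂). Then there exists γ > 0 such that ⟨𝕃(v₁,v₂), (v₁,v₂)⟩ ≥ γ(‖v₁‖² + ‖v₂‖²) for all (v₁, v₂), and consequently 𝕃 is invertible. -/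

import Mathlib

/-!
Write `x = L₁₁ v₁`, `y = L₁₂ v₂`. Then `⟪𝕃 v, v⟫ = α₁⟪x + y, x⟫ + α₂⟪x + y, y⟫ + μ₁‖v₁‖² + μ₂‖v₂‖²`,
and completing the squares `α₁‖x + y/2‖² + α₂‖y + x/2‖² ≥ 0` bounds the coupling part below by
`-(α₂‖L₁₁‖²‖v₁‖² + α₁‖L₁₂‖²‖v₂‖²)/4`, which the smallness conditions dominate by the `μᵢ`.
Invertibility is then Lax–Milgram on `H₁ × H₂` with its `L²` inner product.
-/

open ContinuousLinearMap

theorem neg_quarter_le_weighted_inner_add {E : Type*} [NormedAddCommGroup E]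
    [InnerProductSpace ℝ E] {α₁ α₂ : ℝ} (hα₁ : 0 ≤ α₁) (hα₂ : 0 ≤ α₂) (x y : E) :
    -((α₂ * ‖x‖ ^ 2 + α₁ * ‖y‖ ^ 2) / 4) ≤ α₁ * inner ℝ (x + y) x + α₂ * inner ℝ (x + y) y := by
  have hx : 0 ≤ ‖x‖ ^ 2 + inner ℝ x y + ‖y‖ ^ 2 / 4 := by
    have h := norm_add_sq_real x ((1 / 2 : ℝ) • y)
    rw [inner_smul_right, norm_smul, Real.norm_of_nonneg (by norm_num)] at h
    nlinarith [sq_nonneg ‖x + (1 / 2 : ℝ) • y‖]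
  have hy : 0 ≤ ‖y‖ ^ 2 + inner ℝ x y + ‖x‖ ^ 2 / 4 := by
    have h := norm_add_sq_real y ((1 / 2 : ℝ) • x)
    rw [inner_smul_right, norm_smul, Real.norm_of_nonneg (by norm_num), real_inner_comm] at h
    nlinarith [sq_nonneg ‖y + (1 / 2 : ℝ) • x‖]
  rw [inner_add_left, inner_add_left, real_inner_self_eq_norm_sq, real_inner_self_eq_norm_sq,
    real_inner_comm x y]
  linarith [mul_nonneg hα₁ hx, mul_nonneg hα₂ hy]

theorem ContinuousLinearMap.bijective_of_coercive {V : Type*} [NormedAddCommGroup V]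
    [InnerProductSpace ℝ V] [CompleteSpace V] (T : V →L[ℝ] V) {γ : ℝ} (hγ : 0 < γ)
    (hT : ∀ v, γ * ‖v‖ ^ 2 ≤ inner ℝ (T v) v) : Function.Bijective T := by
  have hB : IsCoercive ((innerSL ℝ).comp T) :=
    ⟨γ, hγ, fun v => by rw [mul_assoc, ← sq]; exact hT v⟩
  have hT_eq : ⇑T = hB.continuousLinearEquivOfBilin :=
    funext fun v => hB.unique_continuousLinearEquivOfBilin fun _ => rfl
  exact hT_eq ▸ hB.continuousLinearEquivOfBilin.bijective

section HilbertProduct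

variable {H₁ H₂ : Type*}
  [NormedAddCommGroup H₁] [InnerProductSpace ℝ H₁] [CompleteSpace H₁]
  [NormedAddCommGroup H₂] [InnerProductSpace ℝ H₂] [CompleteSpace H₂]

theorem ContinuousLinearMap.bijective_of_coercive_prod (T : H₁ × H₂ →L[ℝ] H₁ × H₂) {γ : ℝ}
    (hγ : 0 < γ) (hT : ∀ v, γ * (‖v.1‖ ^ 2 + ‖v.2‖ ^ 2) ≤
      inner ℝ (T v).1 v.1 + inner ℝ (T v).2 v.2) : Function.Bijective T := by
  let e := WithLp.prodContinuousLinearEquiv 2 ℝ H₁ H₂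
  have hT' : Function.Bijective (e.symm.toContinuousLinearMap ∘L T ∘L e.toContinuousLinearMap) :=
    bijective_of_coercive _ hγ fun u => by
      rw [WithLp.prod_norm_sq_eq_of_L2, WithLp.prod_inner_apply]
      simpa [e] using hT (e u)
  simpa using (EquivLike.comp_bijective _ e.symm).mp ((EquivLike.bijective_comp e _).mp hT')

variable {K : Type*} [NormedAddCommGroup K] [InnerProductSpace ℝ K] [CompleteSpace K]

noncomputable def nashOperator (L₁ : H₁ →L[ℝ] K) (L₂ : H₂ →L[ℝ] K) (α₁ α₂ μ₁ μ₂ : ℝ) :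
    H₁ × H₂ →L[ℝ] H₁ × H₂ :=
  (α₁ • adjoint L₁ ∘L L₁.coprod L₂ + μ₁ • fst ℝ H₁ H₂).prod
    (α₂ • adjoint L₂ ∘L L₁.coprod L₂ + μ₂ • snd ℝ H₁ H₂)

@[simp]
theorem nashOperator_apply (L₁ : H₁ →L[ℝ] K) (L₂ : H₂ →L[ℝ] K) (α₁ α₂ μ₁ μ₂ : ℝ) (v : H₁ × H₂) :
    nashOperator L₁ L₂ α₁ α₂ μ₁ μ₂ v =
      (α₁ • adjoint L₁ (L₁ v.1 + L₂ v.2) + μ₁ • v.1,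
        α₂ • adjoint L₂ (L₁ v.1 + L₂ v.2) + μ₂ • v.2) :=
  rfl

theorem inner_nashOperator (L₁ : H₁ →L[ℝ] K) (L₂ : H₂ →L[ℝ] K) (α₁ α₂ μ₁ μ₂ : ℝ) (v : H₁ × H₂) :
    inner ℝ (nashOperator L₁ L₂ α₁ α₂ μ₁ μ₂ v).1 v.1 +
        inner ℝ (nashOperator L₁ L₂ α₁ α₂ μ₁ μ₂ v).2 v.2 =
      α₁ * inner ℝ (L₁ v.1 + L₂ v.2) (L₁ v.1) + α₂ * inner ℝ (L₁ v.1 + L₂ v.2) (L₂ v.2) +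
        (μ₁ * ‖v.1‖ ^ 2 + μ₂ * ‖v.2‖ ^ 2) := by
  simp only [nashOperator_apply, inner_add_left, real_inner_smul_left, adjoint_inner_left,
    real_inner_self_eq_norm_sq]
  ring

theorem nashOperator_coercive (L₁ : H₁ →L[ℝ] K) (L₂ : H₂ →L[ℝ] K) {α₁ α₂ : ℝ} (hα₁ : 0 ≤ α₁)
    (hα₂ : 0 ≤ α₂) (μ₁ μ₂ : ℝ) (v : H₁ × H₂) :
    min (μ₁ - α₂ * ‖L₁‖ ^ 2 / 4) (μ₂ - α₁ * ‖L₂‖ ^ 2 / 4) * (‖v.1‖ ^ 2 + ‖v.2‖ ^ 2) ≤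
      inner ℝ (nashOperator L₁ L₂ α₁ α₂ μ₁ μ₂ v).1 v.1 +
        inner ℝ (nashOperator L₁ L₂ α₁ α₂ μ₁ μ₂ v).2 v.2 := by
  have h₁ : ‖L₁ v.1‖ ^ 2 ≤ ‖L₁‖ ^ 2 * ‖v.1‖ ^ 2 := by
    rw [← mul_pow]; gcongr; exact L₁.le_opNorm v.1
  have h₂ : ‖L₂ v.2‖ ^ 2 ≤ ‖L₂‖ ^ 2 * ‖v.2‖ ^ 2 := by
    rw [← mul_pow]; gcongr; exact L₂.le_opNorm v.2
  calc min (μ₁ - α₂ * ‖L₁‖ ^ 2 / 4) (μ₂ - α₁ * ‖L₂‖ ^ 2 / 4) * (‖v.1‖ ^ 2 + ‖v.2‖ ^ 2)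
      ≤ (μ₁ - α₂ * ‖L₁‖ ^ 2 / 4) * ‖v.1‖ ^ 2 + (μ₂ - α₁ * ‖L₂‖ ^ 2 / 4) * ‖v.2‖ ^ 2 := by
        rw [mul_add]
        gcongr
        exacts [min_le_left _ _, min_le_right _ _]
    _ ≤ -((α₂ * ‖L₁ v.1‖ ^ 2 + α₁ * ‖L₂ v.2‖ ^ 2) / 4) + (μ₁ * ‖v.1‖ ^ 2 + μ₂ * ‖v.2‖ ^ 2) := by
        linarith [mul_le_mul_of_nonneg_left h₁ hα₂, mul_le_mul_of_nonneg_left h₂ hα₁]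
    _ ≤ _ := by
        rw [inner_nashOperator]
        gcongr
        exact neg_quarter_le_weighted_inner_add hα₁ hα₂ (L₁ v.1) (L₂ v.2)

end HilbertProduct

theorem nash_operator_coercive_and_invertible_general
    {H₁ H₂ K₁ K₂ : Type*}
    [NormedAddCommGroup H₁] [InnerProductSpace ℝ H₁] [CompleteSpace H₁]
    [NormedAddCommGroup H₂] [InnerProductSpace ℝ H₂] [CompleteSpace H₂]
    [NormedAddCommGroup K₁] [InnerProductSpace ℝ K₁] [CompleteSpace K₁]
    [NormedAddCommGroup K₂] [InnerProductSpace ℝ K₂] [CompleteSpace K₂]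
    (L₁₁ : H₁ →L[ℝ] K₁) (L₁₂ : H₂ →L[ℝ] K₁)
    (L₂₁ : H₁ →L[ℝ] K₂) (L₂₂ : H₂ →L[ℝ] K₂)
    (α₁ α₂ μ₁ μ₂ : ℝ) (hα₁ : 0 < α₁) (hα₂ : 0 < α₂)
    (hsmall₂ : α₁ * ‖L₁₂‖ ^ 2 + (α₁ + α₂) * ‖L₂₂‖ ^ 2 < 4 / 3 * μ₂)
    (hsmall₁ : α₂ * ‖L₁₁‖ ^ 2 + (α₁ + α₂) * ‖L₂₁‖ ^ 2 < 4 / 3 * μ₁)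
    (𝕃 : H₁ × H₂ → H₁ × H₂)
    (h𝕃 : ∀ v : H₁ × H₂,
      𝕃 v = (α₁ • (adjoint L₁₁) (L₁₁ v.1 + L₁₂ v.2) + μ₁ • v.1,
             α₂ • (adjoint L₁₂) (L₁₁ v.1 + L₁₂ v.2) + μ₂ • v.2)) :
    (∃ γ : ℝ, 0 < γ ∧ ∀ v : H₁ × H₂,
      γ * (‖v.1‖ ^ 2 + ‖v.2‖ ^ 2) ≤ (inner ℝ (𝕃 v).1 v.1 : ℝ) + (inner ℝ (𝕃 v).2 v.2 : ℝ)) ∧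
    Function.Bijective 𝕃 := by
  obtain rfl : 𝕃 = nashOperator L₁₁ L₁₂ α₁ α₂ μ₁ μ₂ := funext h𝕃
  have hα : 0 ≤ α₁ + α₂ := by positivity
  have hγ₁ : 0 < μ₁ - α₂ * ‖L₁₁‖ ^ 2 / 4 := by
    linarith [mul_nonneg hα₂.le (sq_nonneg ‖L₁₁‖), mul_nonneg hα (sq_nonneg ‖L₂₁‖)]
  have hγ₂ : 0 < μ₂ - α₁ * ‖L₁₂‖ ^ 2 / 4 := by
    linarith [mul_nonneg hα₁.le (sq_nonneg ‖L₁₂‖), mul_nonneg hα (sq_nonneg ‖L₂₂‖)]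
  have hcoercive := nashOperator_coercive L₁₁ L₁₂ hα₁.le hα₂.le μ₁ μ₂
  exact ⟨⟨_, lt_min hγ₁ hγ₂, hcoercive⟩, bijective_of_coercive_prod _ (lt_min hγ₁ hγ₂) hcoercive⟩

/-- Two-player coercivity estimate for the Nash-equilibrium operator `𝕃`,
and its invertibility, under the smallness conditions (en2). -/
theorem nash_operator_coercive_and_invertible
    {H₁ H₂ K₁ K₂ : Type*}
    [NormedAddCommGroup H₁] [InnerProductSpace ℝ H₁] [CompleteSpace H₁]
    [NormedAddCommGroup H₂] [InnerProductSpace ℝ H₂] [CompleteSpace H₂]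
    [NormedAddCommGroup K₁] [InnerProductSpace ℝ K₁] [CompleteSpace K₁]
    [NormedAddCommGroup K₂] [InnerProductSpace ℝ K₂] [CompleteSpace K₂]
    (L₁₁ : H₁ →L[ℝ] K₁) (L₁₂ : H₂ →L[ℝ] K₁)
    (L₂₁ : H₁ →L[ℝ] K₂) (L₂₂ : H₂ →L[ℝ] K₂)
    (α₁ α₂ μ₁ μ₂ : ℝ) (hα₁ : 0 < α₁) (hα₂ : 0 < α₂) (hμ₁ : 0 < μ₁) (hμ₂ : 0 < μ₂)
    (hsmall₂ : α₁ * ‖L₁₂‖ ^ 2 + (α₁ + α₂) * ‖L₂₂‖ ^ 2 < 4 / 3 * μ₂)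
    (hsmall₁ : α₂ * ‖L₁₁‖ ^ 2 + (α₁ + α₂) * ‖L₂₁‖ ^ 2 < 4 / 3 * μ₁)
    (𝕃 : H₁ × H₂ → H₁ × H₂)
    (h𝕃 : ∀ v : H₁ × H₂,
      𝕃 v = (α₁ • (adjoint L₁₁) (L₁₁ v.1 + L₁₂ v.2) + μ₁ • v.1,
             α₂ • (adjoint L₁₂) (L₁₁ v.1 + L₁₂ v.2) + μ₂ • v.2)) :
    (∃ γ : ℝ, 0 < γ ∧ ∀ v : H₁ × H₂,
      γ * (‖v.1‖ ^ 2 + ‖v.2‖ ^ 2) ≤ (inner ℝ (𝕃 v).1 v.1 : ℝ) + (inner ℝ (𝕃 v).2 v.2 : ℝ)) ∧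
    Function.Bijective 𝕃 :=
  nash_operator_coercive_and_invertible_general L₁₁ L₁₂ L₂₁ L₂₂ α₁ α₂ μ₁ μ₂ hα₁ hα₂ hsmall₂ hsmall₁
    𝕃 h𝕃
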